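/- arXiv:1505.00102 — 8 statements merged into one kernel-verified Lean document; each statement's English description precedes it below -/
import Mathlib

section
/- Let t ≥ 1. The set of zero divisors of ℤ_{2^t}[i,j,k] is a two-sided ideal, and the quotient by this ideal is isomorphic to ℤ/2; in particular the number of units of ℤ_{2^t}[i,j,k] is 2^(4t-1). -/
/-!
Reducing the quaternion norm `normSq z = z₀² + z₁² + z₂² + z₃²` modulo 2 gives a ring hom
`ℍ[ℤ/2^t] → ℤ/2`: the norm is multiplicative, and the cross term `2 (a b̄).re` of
`normSq (a + b)` vanishes modulo 2. Since `z z̄ = z̄ z = normSq z`, a quaternion is a unit iff its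
norm is, i.e. iff its norm is odd, so the kernel is the set of non-units. In a finite ring the
non-units are exactly the zero divisors. The units form the other coset of the kernel, hence half
of the `2^(4t)` quaternions.
-/

open Quaternion

namespace Quaternion

variable {R : Type*} [CommRing R]

theorem isUnit_iff_isUnit_normSq {z : ℍ[R]} : IsUnit z ↔ IsUnit (normSq z) := by
  refine ⟨fun h => h.map normSq, fun h => ?_⟩
  have hzz : IsUnit (z * star z) := by
    rw [self_mul_star]
    exact h.map (algebraMap R ℍ[R])
  exact ((Commute.isUnit_mul_iff (star_comm_self' z).symm).mp hzz).1

theorem natCard_eq_natCard_pow_four : Nat.card ℍ[R] = Nat.card R ^ 4 := by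
  rw [Nat.card_congr (equivTuple R), Nat.card_fun, Nat.card_fin]

instance [Finite R] : Finite ℍ[R] := Module.finite_of_finite R

def normSqHomOfCharTwo {S : Type*} [CommRing S] [CharP S 2] (g : R →+* S) : ℍ[R] →+* S where
  toFun z := g (normSq z)
  map_one' := by simp
  map_mul' z w := by simp
  map_zero' := by simp
  map_add' z w := by
    rw [normSq_add, map_add, map_add, map_mul, map_ofNat, CharTwo.two_eq_zero, zero_mul, add_zero]

end Quaternion

theorem ZMod.isUnit_iff_castHom_ne_zero {p d : ℕ} [Fact p.Prime] (hd : d ≠ 0)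
    (a : ZMod (p ^ d)) : IsUnit a ↔ ZMod.castHom (dvd_pow_self p hd) (ZMod p) a ≠ 0 := by
  rw [← ZMod.natCast_zmod_val a, map_natCast, ne_eq, ZMod.natCast_eq_zero_iff,
    ZMod.isUnit_natCast_iff_not_dvd_pow Fact.out (Nat.pos_of_ne_zero hd)]

theorem not_isUnit_iff_eq_zero_or_isZeroDivisor {R : Type*} [Ring R] [Finite R] [Nontrivial R]
    {z : R} : ¬IsUnit z ↔ z = 0 ∨ ∃ w, w ≠ 0 ∧ (z * w = 0 ∨ w * z = 0) := by
  rw [isUnit_iff_mem_nonZeroDivisors_of_finite, notMem_nonZeroDivisors_iff]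
  constructor
  · rintro (⟨w, hzw, hw⟩ | ⟨w, hwz, hw⟩)
    exacts [.inr ⟨w, hw, .inl hzw⟩, .inr ⟨w, hw, .inr hwz⟩]
  · rintro (rfl | ⟨w, hw, hzw | hwz⟩)
    exacts [.inl ⟨1, zero_mul 1, one_ne_zero⟩, .inl ⟨w, hzw, hw⟩, .inr ⟨w, hwz, hw⟩]

theorem AddMonoidHom.natCard_eq_two_mul_natCard_fiber_one {G : Type*} [AddGroup G] [Finite G]
    (f : G →+ ZMod 2) (hf : Function.Surjective f) :
    Nat.card G = 2 * Nat.card {x // f x = 1} := by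
  obtain ⟨a, ha⟩ := hf 1
  have hcompl : {x // ¬f x = 1} ≃ {x // f x = 1} :=
    (Equiv.addRight a).subtypeEquiv fun x => by
      have ne_one_iff : ∀ y : ZMod 2, ¬y = 1 ↔ y + 1 = 1 := by decide
      simp only [Equiv.coe_addRight, map_add, ha, ne_one_iff]
  rw [← Nat.card_congr (Equiv.sumCompl fun x => f x = 1), Nat.card_sum, Nat.card_congr hcompl]
  ring

theorem natCard_eq_two_mul_natCard_units {R : Type*} [Ring R] [Finite R] (f : R →+* ZMod 2)
    (hf : ∀ z, IsUnit z ↔ f z ≠ 0) : Nat.card R = 2 * Nat.card Rˣ := by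
  have ne_zero_iff : ∀ a : ZMod 2, a ≠ 0 ↔ a = 1 := by decide
  have hunits : Nat.card Rˣ = Nat.card {z // f z = 1} :=
    (Nat.card_congr (Equiv.ofInjective _ Units.val_injective)).trans
      (Nat.card_congr (Equiv.subtypeEquivRight fun z => (hf z).trans (ne_zero_iff _)))
  rw [hunits]
  exact (f : R →+ ZMod 2).natCard_eq_two_mul_natCard_fiber_one (ZMod.ringHom_surjective f)

/-- For t ≥ 1, the set of zero divisors of ℤ_{2^t}[i,j,k] is a two-sided ideal with quotient
ℤ/2 (expressed as the kernel of a surjective ring homomorphism to ℤ/2), and the number of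
units of ℤ_{2^t}[i,j,k] is 2^(4t-1). -/
theorem zero_divisors_ideal_quaternion (t : ℕ) (ht : 1 ≤ t) :
    (∃ f : Quaternion (ZMod (2 ^ t)) →+* ZMod 2,
      Function.Surjective f ∧
      ∀ z : Quaternion (ZMod (2 ^ t)),
        f z = 0 ↔ (z = 0 ∨ ∃ w : Quaternion (ZMod (2 ^ t)), w ≠ 0 ∧ (z * w = 0 ∨ w * z = 0))) ∧
    Nat.card (Quaternion (ZMod (2 ^ t)))ˣ = 2 ^ (4 * t - 1) := by
  have ht0 : t ≠ 0 := by omega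
  have : Fact (1 < 2 ^ t) := ⟨Nat.one_lt_two_pow ht0⟩
  let f := normSqHomOfCharTwo (ZMod.castHom (dvd_pow_self 2 ht0) (ZMod 2))
  have isUnit_iff (z : ℍ[ZMod (2 ^ t)]) : IsUnit z ↔ f z ≠ 0 :=
    isUnit_iff_isUnit_normSq.trans (ZMod.isUnit_iff_castHom_ne_zero ht0 _)
  refine ⟨⟨f, ZMod.ringHom_surjective f, fun z => ?_⟩, ?_⟩
  · rw [← not_isUnit_iff_eq_zero_or_isZeroDivisor, isUnit_iff, not_not]
  · have hcard := natCard_eq_two_mul_natCard_units f isUnit_iff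
    rw [natCard_eq_natCard_pow_four, Nat.card_zmod, ← pow_mul] at hcard
    refine Nat.eq_of_mul_eq_mul_left two_pos (hcard.symm.trans ?_)
    rw [← pow_succ', mul_comm]
    congr 1
    omega
end

section
/- For n > 1, the quaternion ring ℤ_n[i,j,k] is not isomorphic to the matrix ring M₂(ℤ/n) when n is even. -/
lemma quat_sum_units_not_unit (n : ℕ) (heven : Even n)
    (a b : Quaternion (ZMod n)) (ha : IsUnit a) (hb : IsUnit b) :
    ¬ IsUnit (a + b) := by
  intro hab
  have h2 : (2 : ℕ) ∣ n := heven.two_dvd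
  let φ : ZMod n →+* ZMod 2 := ZMod.castHom h2 (ZMod 2)
  have key : ∀ x : Quaternion (ZMod n), IsUnit x → φ (Quaternion.normSq x) = 1 := by
    intro x hx
    have : IsUnit (φ (Quaternion.normSq x)) := (hx.map Quaternion.normSq).map φ
    rcases this with ⟨u, hu⟩
    have : ∀ v : (ZMod 2)ˣ, (v : ZMod 2) = 1 := by decide
    rw [← hu, this]
  have hsum : Quaternion.normSq (a + b) =
      Quaternion.normSq a + Quaternion.normSq b +
        2 * (a.re * b.re + a.imI * b.imI + a.imJ * b.imJ + a.imK * b.imK) := by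
    simp only [Quaternion.normSq_def', Quaternion.re_add, Quaternion.imI_add,
      Quaternion.imJ_add, Quaternion.imK_add]
    ring
  have h2z : φ 2 = 0 := by
    have : ((2 : ZMod n) : ZMod n) = ((2 : ℕ) : ZMod n) := by norm_cast
    simp [φ, map_ofNat]
    decide
  have := key _ hab
  rw [hsum, map_add, map_add, map_mul, key a ha, key b hb, h2z, zero_mul, add_zero] at this
  norm_num at this
  exact (by decide : (1 : ZMod 2) + 1 ≠ 1) this

/-- For n > 1 even, the quaternion ring ℤ_n[i,j,k] is not isomorphic to M₂(ℤ/n). -/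
theorem quaternion_not_iso_matrix (n : ℕ) (hn : 1 < n) (heven : Even n) :
    IsEmpty (Quaternion (ZMod n) ≃+* Matrix (Fin 2) (Fin 2) (ZMod n)) := by
  constructor
  intro f
  set u : Matrix (Fin 2) (Fin 2) (ZMod n) := !![0, 1; 1, 1] with hu_def
  have hu : IsUnit u := by
    rw [Matrix.isUnit_iff_isUnit_det]
    have : u.det = -1 := by simp [hu_def, Matrix.det_fin_two_of]
    rw [this]
    exact IsUnit.neg isUnit_one
  have hv : IsUnit (1 + u) := by
    rw [Matrix.isUnit_iff_isUnit_det]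
    have : (1 + u).det = 1 := by
      have h1u : (1 : Matrix (Fin 2) (Fin 2) (ZMod n)) + u = !![1, 1; 1, 2] := by
        rw [hu_def, Matrix.one_fin_two]
        ext i j
        fin_cases i <;> fin_cases j <;> simp <;> norm_num
      rw [h1u, Matrix.det_fin_two_of]
      ring
    rw [this]; exact isUnit_one
  have ha : IsUnit (f.symm u) := hu.map f.symm
  have hab : IsUnit ((1 : Quaternion (ZMod n)) + f.symm u) := by
    have : (1 : Quaternion (ZMod n)) + f.symm u = f.symm (1 + u) := by simp
    rw [this]; exact hv.map f.symm
  exact quat_sum_units_not_unit n heven 1 (f.symm u) isUnit_one ha hab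
end

section
/- Let R₁ and R₂ be finite noncommutative unital rings. Then in the directed zero divisor graph of R = R₁ × R₂, there exist two nonzero zero divisors x, y with directed distance exactly 3; hence diam(Γ(R)) = 3. -/
/-- A finite noncommutative ring has a pair of nonzero elements multiplying to zero. -/
lemma exists_zero_divisor_pair (R : Type*) [Ring R] [Fintype R]
    (h : ∃ a b : R, a * b ≠ b * a) :
    ∃ a a' : R, a ≠ 0 ∧ a' ≠ 0 ∧ a * a' = 0 := by
  by_contra hc
  push_neg at hc
  obtain ⟨u, v, huv⟩ := h
  have hnt : Nontrivial R := by
    refine ⟨u, 0, fun hu => huv ?_⟩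
    simp [hu]
  have hnzd : NoZeroDivisors R := by
    constructor
    intro a b hab
    by_contra h'
    push_neg at h'
    exact hc a b h'.1 h'.2 hab
  have hdom : IsDomain R := NoZeroDivisors.to_isDomain R
  classical
  letI : DivisionRing R := Fintype.divisionRingOfIsDomain R
  letI : Field R := littleWedderburn R
  exact huv (mul_comm u v)

/-- If R₁, R₂ are finite noncommutative unital rings, then in the directed zero divisor graph
of R = R₁ × R₂ there exist two nonzero zero divisors x, y at directed distance exactly 3:
x ≠ y, no edge x → y, no directed path of length 2 from x to y, but a directed path of
length 3 exists. Hence diam(Γ(R)) = 3. -/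
theorem diameter_three_product (R₁ R₂ : Type*) [Ring R₁] [Ring R₂]
    [Fintype R₁] [Fintype R₂]
    (h₁ : ∃ a b : R₁, a * b ≠ b * a) (h₂ : ∃ a b : R₂, a * b ≠ b * a) :
    ∃ x y : R₁ × R₂,
      (x ≠ 0 ∧ ∃ w : R₁ × R₂, w ≠ 0 ∧ (x * w = 0 ∨ w * x = 0)) ∧
      (y ≠ 0 ∧ ∃ w : R₁ × R₂, w ≠ 0 ∧ (y * w = 0 ∨ w * y = 0)) ∧
      x ≠ y ∧
      x * y ≠ 0 ∧
      (¬ ∃ z : R₁ × R₂, z ≠ 0 ∧ x * z = 0 ∧ z * y = 0) ∧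
      (∃ a b : R₁ × R₂, a ≠ 0 ∧ b ≠ 0 ∧ x * a = 0 ∧ a * b = 0 ∧ b * y = 0) := by
  obtain ⟨a, a', ha, ha', haa'⟩ := exists_zero_divisor_pair R₁ h₁
  obtain ⟨b', b, hb', hb, hbb'⟩ := exists_zero_divisor_pair R₂ h₂
  have hnt₁ : Nontrivial R₁ := ⟨a, 0, ha⟩
  have hnt₂ : Nontrivial R₂ := ⟨b, 0, hb⟩
  refine ⟨(a, 1), (1, b), ⟨?_, (a', 0), ?_, Or.inl ?_⟩, ⟨?_, (0, b'), ?_, Or.inr ?_⟩,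
      ?_, ?_, ?_, (a', 0), (0, b'), ?_, ?_, ?_, ?_, ?_⟩
  · simp [Prod.ext_iff, ha]
  · simp [Prod.ext_iff, ha']
  · simp [Prod.ext_iff, haa']
  · simp [Prod.ext_iff, hb]
  · simp [Prod.ext_iff, hb']
  · simp [Prod.ext_iff, hbb']
  · intro hxy
    have : a = 1 := (Prod.ext_iff.mp hxy).1
    exact ha' (by simpa [this] using haa')
  · simp [Prod.ext_iff, ha, hb]
  · rintro ⟨⟨z₁, z₂⟩, hz, hxz, hzy⟩
    have h2 : z₂ = 0 := by exact (by simpa [Prod.ext_iff] using hxz : _ ∧ _).2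
    have h1 : z₁ = 0 := by exact (by simpa [Prod.ext_iff] using hzy : _ ∧ _).1
    exact hz (by simp [h1, h2])
  · simp [Prod.ext_iff, ha']
  · simp [Prod.ext_iff, hb']
  · simp [Prod.ext_iff, haa']
  · simp [Prod.ext_iff]
  · simp [Prod.ext_iff, hbb']
end

section
/- Let F be a field. For any two distinct nonzero zero divisors A, B in M₂(F), there exists a nonzero matrix C with AC = 0 and CB = 0; hence the directed zero divisor graph of M₂(F) has diameter at most 2. -/
/-- For any two distinct nonzero zero divisors (i.e. nonzero singular matrices) A, B in M₂(F),
F a field, there is a nonzero matrix C with AC = 0 and CB = 0; hence the directed zero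
divisor graph of M₂(F) has diameter at most 2. -/
theorem matrix_field_diameter_two (F : Type*) [Field F]
    (A B : Matrix (Fin 2) (Fin 2) F)
    (hA0 : A ≠ 0) (hB0 : B ≠ 0) (hAB : A ≠ B)
    (hAdet : A.det = 0) (hBdet : B.det = 0) :
    ∃ C : Matrix (Fin 2) (Fin 2) F, C ≠ 0 ∧ A * C = 0 ∧ C * B = 0 := by
  obtain ⟨v, hv, hAv⟩ := (Matrix.exists_mulVec_eq_zero_iff).2 hAdet
  obtain ⟨w, hw, hwB⟩ := (Matrix.exists_vecMul_eq_zero_iff).2 hBdet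
  refine ⟨Matrix.vecMulVec v w, ?_, ?_, ?_⟩
  · intro h
    obtain ⟨i, hi⟩ := Function.ne_iff.1 hv
    obtain ⟨j, hj⟩ := Function.ne_iff.1 hw
    have := congrFun (congrFun h i) j
    simp [Matrix.vecMulVec_apply] at this
    rcases this with h' | h' <;> [exact hi h'; exact hj h']
  · ext i j
    simp only [Matrix.mul_apply, Matrix.vecMulVec_apply, Matrix.zero_apply]
    have : A.mulVec v i = 0 := by rw [hAv]; rfl
    calc ∑ k, A i k * (v k * w j) = (∑ k, A i k * v k) * w j := by
          rw [Finset.sum_mul]; congr 1; ext k; ring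
      _ = 0 := by rw [show (∑ k, A i k * v k) = A.mulVec v i from rfl, this, zero_mul]
  · ext i j
    simp only [Matrix.mul_apply, Matrix.vecMulVec_apply, Matrix.zero_apply]
    have : Matrix.vecMul w B j = 0 := by rw [hwB]; rfl
    calc ∑ k, v i * w k * B k j = v i * (∑ k, w k * B k j) := by
          rw [Finset.mul_sum]; congr 1; ext k; ring
      _ = 0 := by rw [show (∑ k, w k * B k j) = Matrix.vecMul w B j from rfl, this, mul_zero]
end

section
/- Let R be a finite commutative ring in which every finite set of zero divisors has a common nonzero annihilator. Then the directed zero divisor graph of M_n(R) (n ≥ 2) has diameter at most 2. -/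
/-!
Let `a ≠ 0` kill every zero divisor of `R`. In a finite ring the nonunits are zero divisors, so
they form the ideal `ann a`: `R` is local and `a` kills its maximal ideal `𝔪`. A one-sided zero
divisor `X` has `det X ∈ 𝔪`, so `X` has a kernel vector over the residue field; a lift `u` has a
unit entry and `X u ∈ 𝔪ⁿ`. Likewise `v` has a unit entry and `v Y ∈ 𝔪ⁿ`, and `Z = a • u vᵀ` is
a nonzero matrix with `X Z = 0 = Z Y`.
-/

open Matrix IsLocalRing
open scoped nonZeroDivisors

theorem exists_ne_zero_mul_eq_zero_of_not_isUnit {R : Type*} [CommRing R] [Finite R] {x : R}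
    (hx : ¬IsUnit x) : ∃ t, t ≠ 0 ∧ x * t = 0 := by
  have hx' : x ∉ R⁰ := fun h => hx (isUnit_iff_mem_nonZeroDivisors_of_finite.mpr h)
  obtain ⟨t, ht, ht0⟩ := notMem_nonZeroDivisors_iff_left.mp hx'
  exact ⟨t, ht0, ht⟩

theorem IsLocalRing.of_mul_eq_zero_of_not_isUnit {R : Type*} [CommRing R] {a : R} (ha : a ≠ 0)
    (h : ∀ x, ¬IsUnit x → a * x = 0) : IsLocalRing R :=
  have : Nontrivial R := ⟨⟨a, 0, ha⟩⟩
  have mem_nonunits_iff : ∀ x, x ∈ nonunits R ↔ a * x = 0 := fun x =>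
    ⟨h x, fun hx hu => ha (hu.mul_left_eq_zero.mp hx)⟩
  .of_nonunits_add fun x y hx hy => by
    rw [mem_nonunits_iff] at *
    rw [mul_add, hx, hy, add_zero]

namespace Matrix

variable {n R : Type*} [Fintype n] [DecidableEq n] [CommRing R]

theorem not_isUnit_det_of_mul_eq_zero_or_mul_eq_zero {M W : Matrix n n R} (hW : W ≠ 0)
    (h : M * W = 0 ∨ W * M = 0) : ¬IsUnit M.det := by
  rw [← isUnit_iff_isUnit_det]
  intro hM
  rcases h with h | h
  · exact hW (hM.mul_right_eq_zero.mp h)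
  · exact hW (hM.mul_left_eq_zero.mp h)

variable [IsLocalRing R]

theorem exists_mulVec_mem_maximalIdeal {M : Matrix n n R} (hM : ¬IsUnit M.det) :
    ∃ u : n → R, (∃ i, IsUnit (u i)) ∧ ∀ i, (M *ᵥ u) i ∈ maximalIdeal R := by
  have hdet : (M.map (residue R)).det = 0 := by
    rw [← RingHom.mapMatrix_apply, ← RingHom.map_det, residue_eq_zero_iff, mem_maximalIdeal]
    exact hM
  obtain ⟨w, hw0, hw⟩ := exists_mulVec_eq_zero_iff.mpr hdet
  choose u hu using fun i => residue_surjective (w i)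
  obtain ⟨i, hi⟩ := Function.ne_iff.mp hw0
  refine ⟨u, ⟨i, (residue_ne_zero_iff_isUnit _).mp (by rwa [hu])⟩, fun j => ?_⟩
  rw [← residue_eq_zero_iff, RingHom.map_mulVec, show residue R ∘ u = w from funext hu, hw,
    Pi.zero_apply]

theorem exists_vecMul_mem_maximalIdeal {M : Matrix n n R} (hM : ¬IsUnit M.det) :
    ∃ v : n → R, (∃ j, IsUnit (v j)) ∧ ∀ j, (v ᵥ* M) j ∈ maximalIdeal R := by
  simpa only [mulVec_transpose] using
    exists_mulVec_mem_maximalIdeal (M := Mᵀ) (by rwa [det_transpose])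

theorem exists_ne_zero_mul_eq_zero_and_mul_eq_zero {a : R} (ha : a ≠ 0)
    (ha_ann : ∀ x ∈ maximalIdeal R, a * x = 0) {X Y : Matrix n n R} (hX : ¬IsUnit X.det)
    (hY : ¬IsUnit Y.det) : ∃ Z : Matrix n n R, Z ≠ 0 ∧ X * Z = 0 ∧ Z * Y = 0 := by
  obtain ⟨u, ⟨i, hi⟩, hXu⟩ := exists_mulVec_mem_maximalIdeal hX
  obtain ⟨v, ⟨j, hj⟩, hvY⟩ := exists_vecMul_mem_maximalIdeal hY
  refine ⟨a • vecMulVec u v, fun hZ => ha ?_, ?_, ?_⟩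
  · have hij : a * (u i * v j) = 0 := by simpa [vecMulVec_apply] using congr_fun₂ hZ i j
    exact (hi.mul hj).mul_left_eq_zero.mp hij
  · rw [Matrix.mul_smul, mul_vecMulVec]
    ext k l
    rw [smul_apply, vecMulVec_apply, smul_eq_mul, ← mul_assoc,
      ha_ann _ (hXu k), zero_mul, zero_apply]
  · rw [smul_mul, vecMulVec_mul]
    ext k l
    rw [smul_apply, vecMulVec_apply, smul_eq_mul, mul_left_comm,
      ha_ann _ (hvY l), mul_zero, zero_apply]

end Matrix

theorem matrix_ring_diameter_le_two_general (R : Type*) [CommRing R] [Fintype R] (n : ℕ)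
    (h : ∀ S : Finset R, (∀ s ∈ S, ∃ t : R, t ≠ 0 ∧ s * t = 0) →
      ∃ a : R, a ≠ 0 ∧ ∀ s ∈ S, a * s = 0) :
    ∀ X Y : Matrix (Fin n) (Fin n) R,
      (X ≠ 0 ∧ ∃ W : Matrix (Fin n) (Fin n) R, W ≠ 0 ∧ (X * W = 0 ∨ W * X = 0)) →
      (Y ≠ 0 ∧ ∃ W : Matrix (Fin n) (Fin n) R, W ≠ 0 ∧ (Y * W = 0 ∨ W * Y = 0)) →
      X ≠ Y → X * Y ≠ 0 →
      ∃ Z : Matrix (Fin n) (Fin n) R, Z ≠ 0 ∧ X * Z = 0 ∧ Z * Y = 0 := by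
  classical
  rintro X Y ⟨-, W, hW, hXW⟩ ⟨-, V, hV, hYV⟩ - -
  obtain ⟨a, ha, ha_ann⟩ := h {s | ∃ t, t ≠ 0 ∧ s * t = 0} (by simp)
  have ha_nonunits : ∀ x, ¬IsUnit x → a * x = 0 := fun x hx =>
    ha_ann x (by simpa using exists_ne_zero_mul_eq_zero_of_not_isUnit hx)
  have := IsLocalRing.of_mul_eq_zero_of_not_isUnit ha ha_nonunits
  exact exists_ne_zero_mul_eq_zero_and_mul_eq_zero ha
    (fun x hx => ha_nonunits x ((mem_maximalIdeal x).mp hx))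
    (not_isUnit_det_of_mul_eq_zero_or_mul_eq_zero hW hXW)
    (not_isUnit_det_of_mul_eq_zero_or_mul_eq_zero hV hYV)

/-- If R is a finite commutative ring in which every finite set of zero divisors has a common
nonzero annihilator, then the directed zero divisor graph of M_n(R), n ≥ 2, has diameter at
most 2: any two distinct nonzero zero divisors X, Y not joined by an edge are joined by a
directed path of length 2. -/
theorem matrix_ring_diameter_le_two (R : Type*) [CommRing R] [Fintype R] (n : ℕ) (hn : 2 ≤ n)
    (h : ∀ S : Finset R, (∀ s ∈ S, ∃ t : R, t ≠ 0 ∧ s * t = 0) →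
      ∃ a : R, a ≠ 0 ∧ ∀ s ∈ S, a * s = 0) :
    ∀ X Y : Matrix (Fin n) (Fin n) R,
      (X ≠ 0 ∧ ∃ W : Matrix (Fin n) (Fin n) R, W ≠ 0 ∧ (X * W = 0 ∨ W * X = 0)) →
      (Y ≠ 0 ∧ ∃ W : Matrix (Fin n) (Fin n) R, W ≠ 0 ∧ (Y * W = 0 ∨ W * Y = 0)) →
      X ≠ Y → X * Y ≠ 0 →
      ∃ Z : Matrix (Fin n) (Fin n) R, Z ≠ 0 ∧ X * Z = 0 ∧ Z * Y = 0 :=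
  matrix_ring_diameter_le_two_general R n h
end

section
/- Let w, z be Lipschitz quaternions (quaternions with integer coordinates) and s ≥ 1. If all coordinates of wz are divisible by 2^s, then all coordinates of zw are divisible by 2^s. Equivalently, the ring ℤ_{2^t}[i,j,k] is reversible: ab = 0 implies ba = 0. -/
/-!
Over any commutative ring `xy - yx = 2 (x⃗ × y⃗)`, so `2 ∣ xy - yx`, and `4 ∣ xy - yx` as soon as
`x ≡ y mod 2`. If `2 ∣ w` or `2 ∣ z`, cancel a factor `2` and induct on `s`. Otherwise neither
`N(w)` nor `N(z)` is divisible by `8` (a sum of four squares not all even), and `4 ∣ N(w)` only if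
all coordinates of `w` are odd. As `4^s ∣ N(wz) = N(w) N(z)`, this leaves `s ≤ 2`, with `s = 2`
only when `w ≡ z mod 2`. In every case `2^s ∣ wz - zw`. Reversibility of `ℍ[ℤ/2^t]` follows by
lifting along `ℍ[ℤ] → ℍ[ℤ/2^t]`, whose kernel is `2^t ℍ[ℤ]`.
-/

open Quaternion

theorem Int.four_dvd_sq_or_eight_dvd_sq_sub_one (x : ℤ) :
    (2 ∣ x ∧ 4 ∣ x ^ 2) ∨ (¬ 2 ∣ x ∧ 8 ∣ x ^ 2 - 1) := by
  by_cases hx : 2 ∣ x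
  · exact .inl ⟨hx, by simpa using pow_dvd_pow_of_dvd hx 2⟩
  · refine .inr ⟨hx, Int.eight_dvd_sq_sub_one_of_odd ?_⟩
    rwa [← Int.not_even_iff_odd, even_iff_two_dvd]

theorem Int.not_eight_dvd_sum_four_sq {a b c d : ℤ} (h : ¬ (2 ∣ a ∧ 2 ∣ b ∧ 2 ∣ c ∧ 2 ∣ d)) :
    ¬ 8 ∣ a ^ 2 + b ^ 2 + c ^ 2 + d ^ 2 := by
  rcases a.four_dvd_sq_or_eight_dvd_sq_sub_one with ⟨_, _⟩ | ⟨_, _⟩ <;>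
  rcases b.four_dvd_sq_or_eight_dvd_sq_sub_one with ⟨_, _⟩ | ⟨_, _⟩ <;>
  rcases c.four_dvd_sq_or_eight_dvd_sq_sub_one with ⟨_, _⟩ | ⟨_, _⟩ <;>
  rcases d.four_dvd_sq_or_eight_dvd_sq_sub_one with ⟨_, _⟩ | ⟨_, _⟩ <;> omega

theorem Int.not_two_dvd_of_four_dvd_sum_four_sq {a b c d : ℤ}
    (h : ¬ (2 ∣ a ∧ 2 ∣ b ∧ 2 ∣ c ∧ 2 ∣ d)) (h4 : 4 ∣ a ^ 2 + b ^ 2 + c ^ 2 + d ^ 2) :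
    ¬ 2 ∣ a ∧ ¬ 2 ∣ b ∧ ¬ 2 ∣ c ∧ ¬ 2 ∣ d := by
  rcases a.four_dvd_sq_or_eight_dvd_sq_sub_one with ⟨_, _⟩ | ⟨_, _⟩ <;>
  rcases b.four_dvd_sq_or_eight_dvd_sq_sub_one with ⟨_, _⟩ | ⟨_, _⟩ <;>
  rcases c.four_dvd_sq_or_eight_dvd_sq_sub_one with ⟨_, _⟩ | ⟨_, _⟩ <;>
  rcases d.four_dvd_sq_or_eight_dvd_sq_sub_one with ⟨_, _⟩ | ⟨_, _⟩ <;> omega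

namespace Quaternion

section CommRing

variable {R S : Type*} [CommRing R] [CommRing S]

-- An anonymous-constructor literal is typed `ℍ[R,-1,0,-1]`, on which the `ℍ[R]` simp lemmas
-- do not fire; going through this existential avoids it.
theorem exists_coords (a b c d : R) :
    ∃ x : ℍ[R], x.re = a ∧ x.imI = b ∧ x.imJ = c ∧ x.imK = d :=
  ⟨⟨a, b, c, d⟩, rfl, rfl, rfl, rfl⟩

theorem coe_dvd_iff {r : R} {q : ℍ[R]} :
    (r : ℍ[R]) ∣ q ↔ r ∣ q.re ∧ r ∣ q.imI ∧ r ∣ q.imJ ∧ r ∣ q.imK := by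
  constructor
  · rintro ⟨x, rfl⟩
    simp [coe_mul_eq_smul]
  · rintro ⟨⟨a, ha⟩, ⟨b, hb⟩, ⟨c, hc⟩, ⟨d, hd⟩⟩
    obtain ⟨x, rfl, rfl, rfl, rfl⟩ := exists_coords a b c d
    exact ⟨x, by ext <;> simp [coe_mul_eq_smul, *]⟩

theorem two_pow_dvd_iff {s : ℕ} {q : ℍ[R]} :
    2 ^ s ∣ q ↔ 2 ^ s ∣ q.re ∧ 2 ^ s ∣ q.imI ∧ 2 ^ s ∣ q.imJ ∧ 2 ^ s ∣ q.imK := by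
  rw [show (2 : ℍ[R]) ^ s = ((2 ^ s : R) : ℍ[R]) by norm_cast, coe_dvd_iff]

theorem two_dvd_iff {q : ℍ[R]} : 2 ∣ q ↔ 2 ∣ q.re ∧ 2 ∣ q.imI ∧ 2 ∣ q.imJ ∧ 2 ∣ q.imK := by
  simpa using two_pow_dvd_iff (s := 1) (q := q)

theorem two_dvd_mul_sub_mul (x y : ℍ[R]) : 2 ∣ x * y - y * x := by
  refine two_dvd_iff.2 ⟨⟨0, ?_⟩, ⟨x.imJ * y.imK - x.imK * y.imJ, ?_⟩,
    ⟨x.imK * y.imI - x.imI * y.imK, ?_⟩, ⟨x.imI * y.imJ - x.imJ * y.imI, ?_⟩⟩ <;>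
  simp <;> ring

theorem four_dvd_mul_sub_mul_of_two_dvd_sub {x y : ℍ[R]} (h : 2 ∣ x - y) :
    4 ∣ x * y - y * x := by
  obtain ⟨v, hv⟩ := h
  obtain rfl : x = y + 2 * v := by rw [← hv]; abel
  rw [show (y + 2 * v) * y - y * (y + 2 * v) = 2 * (v * y - y * v) by noncomm_ring,
    show (4 : ℍ[R]) = 2 * 2 by norm_num]
  exact mul_dvd_mul_left 2 (two_dvd_mul_sub_mul v y)

def map (f : R →+* S) (q : ℍ[R]) : ℍ[S] := ⟨f q.re, f q.imI, f q.imJ, f q.imK⟩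

section map

variable (f : R →+* S) (q : ℍ[R])

@[simp] theorem re_map : (map f q).re = f q.re := rfl
@[simp] theorem imI_map : (map f q).imI = f q.imI := rfl
@[simp] theorem imJ_map : (map f q).imJ = f q.imJ := rfl
@[simp] theorem imK_map : (map f q).imK = f q.imK := rfl

end map

def mapRingHom (f : R →+* S) : ℍ[R] →+* ℍ[S] where
  toFun := map f
  map_one' := by ext <;> simp
  map_mul' x y := by ext <;> simp
  map_zero' := by ext <;> simp
  map_add' x y := by ext <;> simp

theorem mapRingHom_surjective {f : R →+* S} (hf : Function.Surjective f) :
    Function.Surjective (mapRingHom f) := by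
  intro q
  obtain ⟨a, ha⟩ := hf q.re
  obtain ⟨b, hb⟩ := hf q.imI
  obtain ⟨c, hc⟩ := hf q.imJ
  obtain ⟨d, hd⟩ := hf q.imK
  obtain ⟨x, rfl, rfl, rfl, rfl⟩ := exists_coords a b c d
  exact ⟨x, by ext <;> simp [mapRingHom, *]⟩

end CommRing

theorem mapRingHom_intCast_eq_zero_iff {n : ℕ} {q : ℍ[ℤ]} :
    mapRingHom (Int.castRingHom (ZMod n)) q = 0 ↔ (n : ℍ[ℤ]) ∣ q := by
  rw [← coe_natCast, coe_dvd_iff]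
  simp [mapRingHom, Quaternion.ext_iff, ZMod.intCast_zmod_eq_zero_iff_dvd]

theorem mul_eq_zero_comm_of_dvd_mul_comm {n : ℕ}
    (h : ∀ w z : ℍ[ℤ], (n : ℍ[ℤ]) ∣ w * z → (n : ℍ[ℤ]) ∣ z * w)
    {a b : ℍ[ZMod n]} (hab : a * b = 0) : b * a = 0 := by
  have hsurj := mapRingHom_surjective (f := Int.castRingHom (ZMod n)) ZMod.intCast_surjective
  obtain ⟨w, rfl⟩ := hsurj a
  obtain ⟨z, rfl⟩ := hsurj b
  rw [← map_mul, mapRingHom_intCast_eq_zero_iff] at hab ⊢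
  exact h w z hab

section Lipschitz

variable {w z q : ℍ[ℤ]}

theorem not_eight_dvd_normSq (hq : ¬ 2 ∣ q) : ¬ 8 ∣ normSq q := by
  rw [two_dvd_iff] at hq
  rw [normSq_def']
  exact Int.not_eight_dvd_sum_four_sq hq

theorem two_dvd_sub_of_four_dvd_normSq (hw : ¬ 2 ∣ w) (hz : ¬ 2 ∣ z) (hw4 : 4 ∣ normSq w)
    (hz4 : 4 ∣ normSq z) : 2 ∣ w - z := by
  rw [two_dvd_iff] at hw hz ⊢
  rw [normSq_def'] at hw4 hz4
  have := Int.not_two_dvd_of_four_dvd_sum_four_sq hw hw4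
  have := Int.not_two_dvd_of_four_dvd_sum_four_sq hz hz4
  simp only [re_sub, imI_sub, imJ_sub, imK_sub]
  omega

theorem padicValInt_normSq_le_two (hq : ¬ 2 ∣ q) : padicValInt 2 (normSq q) ≤ 2 := by
  have h := not_eight_dvd_normSq hq
  rw [show (8 : ℤ) = (2 : ℕ) ^ 3 by norm_num, padicValInt_dvd_iff] at h
  omega

theorem two_mul_le_padicValInt_normSq {k : ℕ} (hq : q ≠ 0) (h : 2 ^ k ∣ q) :
    2 * k ≤ padicValInt 2 (normSq q) := by
  have h' := map_dvd normSq h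
  rw [map_pow, show normSq (2 : ℍ[ℤ]) = (2 : ℕ) ^ 2 by norm_cast, ← pow_mul,
    padicValInt_dvd_iff] at h'
  exact h'.resolve_left (normSq_ne_zero.2 hq)

theorem two_pow_dvd_mul_comm_of_not_two_dvd {s : ℕ} (hw : ¬ 2 ∣ w) (hz : ¬ 2 ∣ z)
    (h : 2 ^ s ∣ w * z) : 2 ^ s ∣ z * w := by
  have hw0 : w ≠ 0 := by rintro rfl; exact hw (dvd_zero 2)
  have hz0 : z ≠ 0 := by rintro rfl; exact hz (dvd_zero 2)
  have hv := two_mul_le_padicValInt_normSq (mul_ne_zero hw0 hz0) h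
  rw [map_mul, padicValInt.mul (normSq_ne_zero.2 hw0) (normSq_ne_zero.2 hz0)] at hv
  have hvw := padicValInt_normSq_le_two hw
  have hvz := padicValInt_normSq_le_two hz
  have hs : s ≤ 2 := by omega
  rw [show z * w = w * z - (w * z - z * w) by abel]
  refine dvd_sub h ?_
  interval_cases s
  · exact one_dvd _
  · simpa using two_dvd_mul_sub_mul w z
  · have four_dvd (x : ℍ[ℤ]) (hx : padicValInt 2 (normSq x) = 2) : 4 ∣ normSq x := by
      rw [show (4 : ℤ) = (2 : ℕ) ^ 2 by norm_num, padicValInt_dvd_iff]; omega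
    simpa [show (2 : ℍ[ℤ]) ^ 2 = 4 by norm_num] using four_dvd_mul_sub_mul_of_two_dvd_sub
      (two_dvd_sub_of_four_dvd_normSq hw hz (four_dvd w (by omega)) (four_dvd z (by omega)))

theorem two_pow_dvd_mul_comm {s : ℕ} (h : 2 ^ s ∣ w * z) : 2 ^ s ∣ z * w := by
  have h2 : (2 : ℍ[ℤ]) ≠ 0 := by exact_mod_cast coe_injective.ne (two_ne_zero : (2 : ℤ) ≠ 0)
  induction s generalizing w z with
  | zero => exact one_dvd _
  | succ s ih =>
    by_cases hw : 2 ∣ w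
    · obtain ⟨w, rfl⟩ := hw
      rw [mul_assoc, pow_succ', mul_dvd_mul_iff_left h2] at h
      rw [← mul_assoc, (Commute.ofNat_right z 2).eq, mul_assoc, pow_succ']
      exact mul_dvd_mul_left 2 (ih h)
    by_cases hz : 2 ∣ z
    · obtain ⟨z, rfl⟩ := hz
      rw [← mul_assoc, (Commute.ofNat_right w 2).eq, mul_assoc, pow_succ',
        mul_dvd_mul_iff_left h2] at h
      rw [mul_assoc, pow_succ']
      exact mul_dvd_mul_left 2 (ih h)
    exact two_pow_dvd_mul_comm_of_not_two_dvd hw hz h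

end Lipschitz

end Quaternion

/-- If all coordinates of the product wz of Lipschitz quaternions are divisible by 2^s
(s ≥ 1), then so are all coordinates of zw. Equivalently, ℤ_{2^t}[i,j,k] is reversible:
ab = 0 implies ba = 0. -/
theorem lipschitz_reversible :
    (∀ (w z : Quaternion ℤ) (s : ℕ), 1 ≤ s →
      ((2 ^ s : ℤ) ∣ (w * z).re ∧ (2 ^ s : ℤ) ∣ (w * z).imI ∧
        (2 ^ s : ℤ) ∣ (w * z).imJ ∧ (2 ^ s : ℤ) ∣ (w * z).imK) →
      ((2 ^ s : ℤ) ∣ (z * w).re ∧ (2 ^ s : ℤ) ∣ (z * w).imI ∧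
        (2 ^ s : ℤ) ∣ (z * w).imJ ∧ (2 ^ s : ℤ) ∣ (z * w).imK)) ∧
    (∀ t : ℕ, 1 ≤ t → ∀ a b : Quaternion (ZMod (2 ^ t)), a * b = 0 → b * a = 0) := by
  refine ⟨fun w z s _ h => ?_, fun t _ a b hab => ?_⟩
  · exact two_pow_dvd_iff.1 (two_pow_dvd_mul_comm (two_pow_dvd_iff.2 h))
  · refine mul_eq_zero_comm_of_dvd_mul_comm (fun w z h => ?_) hab
    push_cast at h ⊢
    exact two_pow_dvd_mul_comm h
end

section
/- For every t ≥ 1, the element 2^(t-1)(1+i+j+k) in ℤ_{2^t}[i,j,k] annihilates every zero divisor: if z is a zero divisor of ℤ_{2^t}[i,j,k], then 2^(t-1)(1+i+j+k)·z = 0. Consequently the domination number of the undirected zero divisor graph of ℤ_{2^t}[i,j,k] is 1. -/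
/-!
Put `c = 2 ^ (t - 1)`, so that `2 * c = 0`. Then every coordinate of `e * z` equals
`c * (z.re + z.imI + z.imJ + z.imK)`, which vanishes as soon as the coordinate sum is even.
If `z * w = 0` or `w * z = 0` with `w ≠ 0`, then `normSq z • w = 0`, so `normSq z` is not a unit
of `ℤ/2^t`, i.e. it is even; and `normSq z` has the parity of the coordinate sum.
-/

open Quaternion

namespace Quaternion

variable {R : Type*} [CommRing R]

theorem mul_eq_zero_of_coords_eq {q : ℍ[R]} {c : R} (hr : q.re = c) (hi : q.imI = c)
    (hj : q.imJ = c) (hk : q.imK = c) (h2 : 2 * c = 0) {z : ℍ[R]}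
    (hz : c * (z.re + z.imI + z.imJ + z.imK) = 0) : q * z = 0 := by
  ext <;> simp only [re_mul, imI_mul, imJ_mul, imK_mul, hr, hi, hj, hk, re_zero, imI_zero,
    imJ_zero, imK_zero]
  · linear_combination hz - (z.imI + z.imJ + z.imK) * h2
  · linear_combination hz - z.imJ * h2
  · linear_combination hz - z.imK * h2
  · linear_combination hz - z.imI * h2

theorem not_isUnit_normSq_of_mul_eq_zero {z w : ℍ[R]} (hw : w ≠ 0)
    (h : z * w = 0 ∨ w * z = 0) : ¬IsUnit (normSq z) := by
  intro hu
  refine hw (hu.smul_eq_zero.1 ?_)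
  rcases h with h | h
  · rw [← coe_mul_eq_smul, ← star_mul_self, mul_assoc, h, mul_zero]
  · rw [← mul_coe_eq_smul, ← self_mul_star, ← mul_assoc, h, zero_mul]

theorem map_normSq_eq_map_sum (f : R →+* ZMod 2) (z : ℍ[R]) :
    f (normSq z) = f (z.re + z.imI + z.imJ + z.imK) := by
  have hsq : ∀ y : ZMod 2, y ^ 2 = y := by decide
  simp only [normSq_def', map_add, map_pow, hsq]

end Quaternion

namespace ZMod

variable {p t : ℕ} [Fact p.Prime]

theorem isUnit_of_castHom_ne_zero (ht : t ≠ 0) {x : ZMod (p ^ t)}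
    (hx : castHom (dvd_pow_self p ht) (ZMod p) x ≠ 0) : IsUnit x := by
  rw [castHom_apply, cast_eq_val, Ne, natCast_eq_zero_iff] at hx
  have hcop : x.val.Coprime (p ^ t) :=
    (((Fact.out : p.Prime).coprime_iff_not_dvd).2 hx).symm.pow_right t
  simpa using (isUnit_iff_coprime x.val (p ^ t)).2 hcop

theorem pow_pred_mul_eq_zero_iff (ht : t ≠ 0) (x : ZMod (p ^ t)) :
    (p : ZMod (p ^ t)) ^ (t - 1) * x = 0 ↔ castHom (dvd_pow_self p ht) (ZMod p) x = 0 := by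
  rw [← natCast_zmod_val x, ← Nat.cast_pow, ← Nat.cast_mul, natCast_eq_zero_iff, map_natCast,
    natCast_eq_zero_iff]
  generalize x.val = n
  rw [← pow_sub_one_mul ht, Nat.mul_dvd_mul_iff_left (pow_pos (Fact.out : p.Prime).pos _)]

end ZMod

/-- For t ≥ 1, the element e = 2^(t-1)(1+i+j+k) of ℤ_{2^t}[i,j,k] is a nonzero zero divisor
which annihilates every zero divisor z (i.e. e·z = 0). Consequently the domination number of
the undirected zero divisor graph of ℤ_{2^t}[i,j,k] is 1. -/
theorem domination_number_one_quaternion (t : ℕ) (ht : 1 ≤ t) :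
    let e : Quaternion (ZMod (2 ^ t)) := (2 ^ (t - 1) : ZMod (2 ^ t)) • (⟨1, 1, 1, 1⟩ : Quaternion (ZMod (2 ^ t)))
    e ≠ 0 ∧
    (∃ w : Quaternion (ZMod (2 ^ t)), w ≠ 0 ∧ (e * w = 0 ∨ w * e = 0)) ∧
    (∀ z : Quaternion (ZMod (2 ^ t)),
      (z = 0 ∨ ∃ w : Quaternion (ZMod (2 ^ t)), w ≠ 0 ∧ (z * w = 0 ∨ w * z = 0)) →
      e * z = 0) := by
  intro e
  have ht0 : t ≠ 0 := by omega
  set c : ZMod (2 ^ t) := 2 ^ (t - 1)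
  have hc : ∀ x, c * x = 0 ↔ ZMod.castHom (dvd_pow_self 2 ht0) (ZMod 2) x = 0 := by
    simpa using ZMod.pow_pred_mul_eq_zero_iff (p := 2) ht0
  have h2 : 2 * c = 0 := by rw [mul_comm, hc, map_ofNat]; rfl
  have hc0 : c ≠ 0 := fun h =>
    one_ne_zero ((map_one _).symm.trans ((hc 1).1 (by rw [h, zero_mul])))
  -- each coordinate of `e` unfolds to `c * 1`
  have hann : ∀ {z : ℍ[ZMod (2 ^ t)]}, c * (z.re + z.imI + z.imJ + z.imK) = 0 → e * z = 0 :=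
    Quaternion.mul_eq_zero_of_coords_eq (mul_one c) (mul_one c) (mul_one c) (mul_one c) h2
  have he : e ≠ 0 := fun h =>
    hc0 ((mul_one c).symm.trans (congrArg QuaternionAlgebra.re h))
  refine ⟨he, ⟨e, he, Or.inl (hann ?_)⟩, ?_⟩
  · show c * (c * 1 + c * 1 + c * 1 + c * 1) = 0
    linear_combination (2 * c) * h2
  · rintro z (rfl | ⟨w, hw, hzw⟩)
    · exact mul_zero e
    refine hann ((hc _).2 ?_)
    rw [← Quaternion.map_normSq_eq_map_sum]
    by_contra h
    exact Quaternion.not_isUnit_normSq_of_mul_eq_zero hw hzw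
      (ZMod.isUnit_of_castHom_ne_zero ht0 h)
end

section
/- Let p be an odd prime. The domination number of the undirected zero divisor graph of M₂(ℤ/p) is exactly p+1. In particular the set consisting of [[1,a],[0,0]] for a ∈ ℤ/p together with [[0,0],[0,1]] is a minimal dominating set. -/
/-!
A nonzero singular `2 × 2` matrix `X` over a field `K` with `q` elements has a kernel line and an
image line in `K²`, and for two such matrices `X * Y = 0` exactly when the image of `Y` is the
kernel of `X`. The kernels of `[[1,a],[0,0]]` and `[[0,0],[0,1]]` run through all `q + 1` lines, so
every vertex is annihilated on the left by one of these `q + 1` matrices.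

Conversely, let `D` be dominating with `|D| ≤ q`. Some line `L` is the image of no member of `D`
and some line `M` is the kernel of no member of `D`; no member of `D` is then adjacent to a matrix
with kernel `L` and image `M`, so all `q - 1` of these lie in `D`. Hence the members of `D` have
at most two images, another line `L' ≠ L` is the image of no member of `D`, and the `q - 1`
matrices with kernel `L'` and image `M` lie in `D` as well: `2 (q - 1) ≤ q`, impossible for
`q ≥ 3`.
-/

open Module LinearMap Matrix

theorem Set.ncard_image_add_ncard_le {α β : Type*} {s t : Set α} (hs : s.Finite) (hts : t ⊆ s)
    {f : α → β} {b : β} (hf : ∀ x ∈ t, f x = b) :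
    (f '' s).ncard + t.ncard ≤ s.ncard + 1 := by
  have hsub : f '' s ⊆ insert b (f '' (s \ t)) := by
    rintro _ ⟨x, hx, rfl⟩
    by_cases hxt : x ∈ t
    · exact .inl (hf x hxt)
    · exact .inr ⟨x, ⟨hx, hxt⟩, rfl⟩
  have hts' : t.ncard ≤ s.ncard := Set.ncard_le_ncard hts hs
  calc (f '' s).ncard + t.ncard
      ≤ (f '' (s \ t)).ncard + 1 + t.ncard := by
        gcongr
        exact (Set.ncard_le_ncard hsub (((hs.sdiff).image f).insert b)).trans
          (Set.ncard_insert_le _ _)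
    _ ≤ (s \ t).ncard + 1 + t.ncard := by gcongr; exact Set.ncard_image_le hs.sdiff
    _ = s.ncard + 1 := by rw [Set.ncard_sdiff hts (hs.subset hts)]; omega

theorem Submodule.exists_eq_span_singleton_of_finrank_eq_one {K V : Type*} [DivisionRing K]
    [AddCommGroup V] [Module K V] {W : Submodule K V} (hW : finrank K W = 1) :
    ∃ v ≠ 0, W = K ∙ v := by
  refine ⟨(Projectivization.mk'' W hW).rep, Projectivization.rep_nonzero _, ?_⟩
  rw [← Projectivization.submodule_eq, Projectivization.submodule_mk'']

theorem Submodule.ncard_setOf_finrank_eq_one {K V : Type*} [Field K] [Finite K] [AddCommGroup V]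
    [Module K V] (hV : finrank K V = 2) :
    {W : Submodule K V | finrank K W = 1}.ncard = Nat.card K + 1 := by
  rw [← Nat.card_coe_set_eq, ← Projectivization.card_of_finrank_two K V hV]
  exact Nat.card_congr (Projectivization.equivSubmodule K V).symm

namespace Matrix

theorem mul_eq_zero_iff_range_le_ker {R l m n : Type*} [CommSemiring R] [Fintype m]
    [Fintype n] [DecidableEq n] {A : Matrix l m R} {B : Matrix m n R} :
    A * B = 0 ↔ range B.mulVecLin ≤ ker A.mulVecLin := by
  rw [range_le_ker_iff, ← mulVecLin_mul, ← toLin'_apply', LinearEquiv.map_eq_zero_iff]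

theorem mulVecLin_smul {R m n : Type*} [CommSemiring R] [Fintype n] (c : R) (A : Matrix m n R) :
    (c • A).mulVecLin = c • A.mulVecLin :=
  LinearMap.ext fun v => smul_mulVec c A v

variable {K : Type*} [Field K] {A B : Matrix (Fin 2) (Fin 2) K}

theorem finrank_ker_mulVecLin_eq_one (hA : A ≠ 0) (hdet : A.det = 0) :
    finrank K (ker A.mulVecLin) = 1 := by
  have hsum := finrank_range_add_finrank_ker A.mulVecLin
  rw [finrank_fin_fun] at hsum
  have hrange : finrank K (range A.mulVecLin) ≠ 0 := by
    rw [Ne, Submodule.finrank_eq_zero, range_eq_bot, ← toLin'_apply',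
      LinearEquiv.map_eq_zero_iff]
    exact hA
  have hker : finrank K (ker A.mulVecLin) ≠ 0 := by
    obtain ⟨v, hv, hAv⟩ := exists_mulVec_eq_zero_iff.mpr hdet
    rw [Ne, Submodule.finrank_eq_zero, Submodule.eq_bot_iff]
    exact fun h => hv (h v hAv)
  omega

theorem finrank_range_mulVecLin_eq_one (hA : A ≠ 0) (hdet : A.det = 0) :
    finrank K (range A.mulVecLin) = 1 := by
  have hsum := finrank_range_add_finrank_ker A.mulVecLin
  rw [finrank_fin_fun, finrank_ker_mulVecLin_eq_one hA hdet] at hsum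
  omega

theorem range_mulVecLin_eq_ker_of_mul_eq_zero (hA : A ≠ 0) (hdetA : A.det = 0) (hB : B ≠ 0)
    (hdetB : B.det = 0) (hAB : A * B = 0) : range B.mulVecLin = ker A.mulVecLin :=
  Submodule.eq_of_le_of_finrank_eq (mul_eq_zero_iff_range_le_ker.mp hAB) <| by
    rw [finrank_range_mulVecLin_eq_one hB hdetB, finrank_ker_mulVecLin_eq_one hA hdetA]

end Matrix

namespace MatrixZeroDivisorGraph

variable {K : Type*} [Field K]

def IsDominating (D : Set (Matrix (Fin 2) (Fin 2) K)) : Prop :=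
  (∀ A ∈ D, A ≠ 0 ∧ A.det = 0) ∧
    ∀ A, A ≠ 0 ∧ A.det = 0 → A ∉ D → ∃ B ∈ D, A ≠ B ∧ (A * B = 0 ∨ B * A = 0)

theorem isDominating_of_forall_exists_mulVec_eq_zero {D : Set (Matrix (Fin 2) (Fin 2) K)}
    (hD : ∀ A ∈ D, A ≠ 0 ∧ A.det = 0) (hkill : ∀ v, ∃ B ∈ D, B *ᵥ v = 0) :
    IsDominating D := by
  refine ⟨hD, fun A hA hAD => ?_⟩
  have hrange := finrank_range_mulVecLin_eq_one hA.1 hA.2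
  obtain ⟨v, -, hv⟩ := Submodule.exists_eq_span_singleton_of_finrank_eq_one hrange
  obtain ⟨B, hBD, hBv⟩ := hkill v
  refine ⟨B, hBD, ?_, .inr ?_⟩
  · rintro rfl
    exact hAD hBD
  · rw [mul_eq_zero_iff_range_le_ker, hv, Submodule.span_singleton_le_iff_mem, mem_ker,
      mulVecLin_apply]
    exact hBv

variable (K) in
def standardDominatingSet : Set (Matrix (Fin 2) (Fin 2) K) :=
  {M | (∃ a : K, M = !![1, a; 0, 0]) ∨ M = !![0, 0; 0, 1]}

theorem isDominating_standardDominatingSet : IsDominating (standardDominatingSet K) := by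
  refine isDominating_of_forall_exists_mulVec_eq_zero ?_ fun v => ?_
  · rintro _ (⟨a, rfl⟩ | rfl) <;> refine ⟨fun h => ?_, by simp [det_fin_two_of]⟩
    · simpa using congr_fun₂ h 0 0
    · simpa using congr_fun₂ h 1 1
  · by_cases hv : v 1 = 0
    · refine ⟨!![0, 0; 0, 1], .inr rfl, ?_⟩
      ext i; fin_cases i <;> simp [mulVec, dotProduct, hv]
    · refine ⟨!![1, -(v 0 / v 1); 0, 0], .inl ⟨_, rfl⟩, ?_⟩
      ext i; fin_cases i <;> simp [mulVec, dotProduct, div_mul_cancel₀ _ hv]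

theorem ncard_standardDominatingSet [Finite K] :
    (standardDominatingSet K).ncard = Nat.card K + 1 := by
  have hinj : Function.Injective fun a : K => !![1, a; 0, 0] :=
    fun a b h => by simpa using congr_fun₂ h 0 1
  have hset : standardDominatingSet K =
      insert !![0, 0; 0, 1] (Set.range fun a : K => !![1, a; 0, 0]) := by
    ext M
    simp only [standardDominatingSet, Set.mem_ofPred_eq, Set.mem_insert_iff, Set.mem_range,
      eq_comm (a := M)]
    tauto
  rw [hset, Set.ncard_insert_of_notMem, Set.ncard_range_of_injective hinj]
  rintro ⟨a, h⟩
  simpa using congr_fun₂ h 0 0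

def kerRangeFiber (L M : Submodule K (Fin 2 → K)) : Set (Matrix (Fin 2) (Fin 2) K) :=
  {X | X ≠ 0 ∧ X.det = 0 ∧ ker X.mulVecLin = L ∧ range X.mulVecLin = M}

theorem kerRangeFiber_nonempty {L M : Submodule K (Fin 2 → K)} (hL : finrank K L = 1)
    (hM : finrank K M = 1) : (kerRangeFiber L M).Nonempty := by
  obtain ⟨l, hl, rfl⟩ := Submodule.exists_eq_span_singleton_of_finrank_eq_one hL
  obtain ⟨m, hm, rfl⟩ := Submodule.exists_eq_span_singleton_of_finrank_eq_one hM
  -- `w ⬝ᵥ x = l 0 * x 1 - l 1 * x 0` vanishes exactly on `K ∙ l`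
  set w : Fin 2 → K := ![-l 1, l 0]
  have hw : w ≠ 0 := by
    intro h
    apply hl
    ext i; fin_cases i
    · simpa [w] using congr_fun h 1
    · simpa [w] using congr_fun h 0
  have hX : vecMulVec m w ≠ 0 := by simp [hm, hw]
  have hdet : (vecMulVec m w).det = 0 := by
    simp only [det_fin_two, vecMulVec_apply]; ring
  have hmulVec : ∀ x, vecMulVec m w *ᵥ x = (w ⬝ᵥ x) • m := fun x => by
    rw [vecMulVec_mulVec, op_smul_eq_smul]
  refine ⟨vecMulVec m w, hX, hdet, ?_, ?_⟩
  · refine (Submodule.eq_of_le_of_finrank_eq ?_ ?_).symm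
    · rw [Submodule.span_singleton_le_iff_mem, mem_ker, mulVecLin_apply, hmulVec]
      simp [w, dotProduct, Fin.sum_univ_two, mul_comm]
    · rw [finrank_span_singleton hl, finrank_ker_mulVecLin_eq_one hX hdet]
  · refine Submodule.eq_of_le_of_finrank_eq ?_ ?_
    · rintro _ ⟨x, rfl⟩
      exact Submodule.mem_span_singleton.mpr ⟨w ⬝ᵥ x, (hmulVec x).symm⟩
    · rw [finrank_span_singleton hm, finrank_range_mulVecLin_eq_one hX hdet]

theorem ncard_kerRangeFiber [Finite K] {L M : Submodule K (Fin 2 → K)} (hL : finrank K L = 1)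
    (hM : finrank K M = 1) : Nat.card K - 1 ≤ (kerRangeFiber L M).ncard := by
  obtain ⟨X, hX, hdet, hker, hrange⟩ := kerRangeFiber_nonempty hL hM
  have hinj : Function.Injective fun c : Kˣ => (c : K) • X :=
    (smul_left_injective K hX).comp Units.val_injective
  rw [← Nat.card_units, ← Set.ncard_range_of_injective hinj]
  refine Set.ncard_le_ncard ?_ (Set.toFinite _)
  rintro _ ⟨c, rfl⟩
  refine ⟨smul_ne_zero c.ne_zero hX, by simp [hdet], ?_, ?_⟩
  · rw [mulVecLin_smul, ker_smul _ _ c.ne_zero, hker]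
  · rw [mulVecLin_smul, range_smul _ _ c.ne_zero, hrange]

theorem kerRangeFiber_subset {D : Set (Matrix (Fin 2) (Fin 2) K)} (hD : IsDominating D)
    {L M : Submodule K (Fin 2 → K)} (hL : L ∉ (fun B => range B.mulVecLin) '' D)
    (hM : M ∉ (fun B => ker B.mulVecLin) '' D) : kerRangeFiber L M ⊆ D := by
  rintro X ⟨hX, hdetX, hker, hrange⟩
  by_contra hXD
  obtain ⟨B, hBD, -, hXB | hBX⟩ := hD.2 X ⟨hX, hdetX⟩ hXD
  all_goals obtain ⟨hB, hdetB⟩ := hD.1 B hBD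
  · exact hL ⟨B, hBD, (range_mulVecLin_eq_ker_of_mul_eq_zero hX hdetX hB hdetB hXB).trans hker⟩
  · exact hM ⟨B, hBD, (range_mulVecLin_eq_ker_of_mul_eq_zero hB hdetB hX hdetX hBX).symm.trans
      hrange⟩

theorem le_ncard_of_isDominating [Finite K] (hK : 3 ≤ Nat.card K)
    {D : Set (Matrix (Fin 2) (Fin 2) K)} (hD : IsDominating D) : Nat.card K + 1 ≤ D.ncard := by
  by_contra! hDK
  set lines := {W : Submodule K (Fin 2 → K) | finrank K W = 1}
  set ranges := (fun B => range B.mulVecLin) '' D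
  set kers := (fun B => ker B.mulVecLin) '' D
  have hlines : lines.ncard = Nat.card K + 1 :=
    Submodule.ncard_setOf_finrank_eq_one (finrank_fin_fun K)
  obtain ⟨L₀, hL₀, hL₀D⟩ := Set.exists_mem_notMem_of_ncard_lt_ncard (s := ranges)
    (t := lines) ((Set.ncard_image_le (Set.toFinite D)).trans_lt (hlines ▸ hDK))
  obtain ⟨M, hM, hMD⟩ := Set.exists_mem_notMem_of_ncard_lt_ncard (s := kers)
    (t := lines) ((Set.ncard_image_le (Set.toFinite D)).trans_lt (hlines ▸ hDK))
  have hsub₀ := kerRangeFiber_subset hD hL₀D hMD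
  have hcard₀ := ncard_kerRangeFiber hL₀ hM
  have hranges : ranges.ncard ≤ 2 := by
    have : ranges.ncard + (kerRangeFiber L₀ M).ncard ≤ D.ncard + 1 :=
      Set.ncard_image_add_ncard_le (Set.toFinite D) hsub₀ fun X hX => hX.2.2.2
    omega
  have hfree : 1 < (lines \ ranges).ncard := by
    have := Set.le_ncard_sdiff ranges lines
    omega
  obtain ⟨L₁, ⟨hL₁, hL₁D⟩, hL₁₀⟩ := Set.exists_ne_of_one_lt_ncard hfree L₀
  have hsub₁ := kerRangeFiber_subset hD hL₁D hMD
  have hcard₁ := ncard_kerRangeFiber hL₁ hM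
  have hdisj : Disjoint (kerRangeFiber L₀ M) (kerRangeFiber L₁ M) :=
    Set.disjoint_left.mpr fun X h₀ h₁ => hL₁₀ (h₁.2.2.1.symm.trans h₀.2.2.1)
  have hunion := Set.ncard_le_ncard (Set.union_subset hsub₀ hsub₁) (Set.toFinite D)
  rw [Set.ncard_union_eq hdisj] at hunion
  omega

end MatrixZeroDivisorGraph

open MatrixZeroDivisorGraph

/-- For an odd prime p, the domination number of the undirected zero divisor graph of
M₂(ℤ/p) is exactly p+1: the set of matrices [[1,a],[0,0]] (a ∈ ℤ/p) together with
[[0,0],[0,1]] is a dominating set of cardinality p+1, and every dominating set has at least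
p+1 elements. -/
theorem domination_number_matrix_ring (p : ℕ) [Fact p.Prime] (hodd : Odd p) :
    let Vtx : Matrix (Fin 2) (Fin 2) (ZMod p) → Prop := fun A => A ≠ 0 ∧ A.det = 0
    let Dominating : Set (Matrix (Fin 2) (Fin 2) (ZMod p)) → Prop := fun D =>
      (∀ A ∈ D, Vtx A) ∧
      (∀ A, Vtx A → A ∉ D → ∃ B ∈ D, A ≠ B ∧ (A * B = 0 ∨ B * A = 0))
    let D₀ : Set (Matrix (Fin 2) (Fin 2) (ZMod p)) :=
      {M | (∃ a : ZMod p, M = !![1, a; 0, 0]) ∨ M = !![0, 0; 0, 1]}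
    Dominating D₀ ∧ Nat.card D₀ = p + 1 ∧
      ∀ D : Set (Matrix (Fin 2) (Fin 2) (ZMod p)), Dominating D → p + 1 ≤ Nat.card D := by
  intro Vtx Dominating D₀
  have hp : 3 ≤ Nat.card (ZMod p) := by
    have := (Fact.out : p.Prime).two_le
    obtain ⟨k, rfl⟩ := hodd
    rw [Nat.card_zmod]
    omega
  refine ⟨isDominating_standardDominatingSet, ?_, fun D hD => ?_⟩
  · have := ncard_standardDominatingSet (K := ZMod p)
    rwa [Nat.card_zmod] at this
  · have := le_ncard_of_isDominating hp hD
    rwa [Nat.card_zmod] at this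
end
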